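/- arXiv:1905.08681 — 2 statements merged into one kernel-verified Lean document; each statement's English description precedes it below -/
import Mathlib

section
/- Sparse forms satisfy Hölder-type L^p bounds: if 𝒢 is a collection of triadic intervals in W with ‖𝒢‖_{sp} := sup_I |I|^{-1} Σ_{J∈𝒢, J⊆I} |J| finite, then for any Hölder triple (p̄_u)_{u=0}^2 (Σ 1/p̄_u = 1) and exponents p_u < p̄_u, Σ_{I∈𝒢} |I| ∏_{u=0}^2 (⨍_I |f_u|^{p_u})^{1/p_u} ≲ ‖𝒢‖_{sp} ∏_{u=0}^2 ‖f_u‖_{L^{p̄_u}(W)} for all nonnegative measurable f_u on W. -/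
open scoped ENNReal NNReal Classical

noncomputable section


/-- A triadic interval `[k·3^n, (k+1)·3^n)` in `[0,∞)`. -/
structure TriInt where
  n : ℤ
  k : ℕ

/-- The underlying set of a triadic interval. -/
def TriInt.set (J : TriInt) : Set ℝ :=
  Set.Ico ((J.k : ℝ) * (3:ℝ) ^ J.n) (((J.k : ℝ) + 1) * (3:ℝ) ^ J.n)

/-- The length of a triadic interval, as an extended nonneg real. -/
def TriInt.len (J : TriInt) : ℝ≥0∞ := ENNReal.ofReal ((3:ℝ) ^ J.n)

open MeasureTheory

/-- The sparse constant `‖𝒢‖_{sp}` of a collection of triadic intervals. -/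
def sparseNorm (G : Set TriInt) : ℝ≥0∞ :=
  ⨆ J : TriInt, (∑' K : {K : TriInt // K ∈ G ∧ K.set ⊆ J.set}, K.val.len) / J.len

namespace TriInt

instance : MeasurableSpace TriInt := ⊤
instance : MeasurableSingletonClass TriInt := ⟨fun _ => trivial⟩
instance : Countable TriInt :=
  Function.Injective.countable (f := fun J : TriInt => (J.n, J.k))
    (fun a b h => by cases a; cases b; simpa using h)

lemma zpow3_pos (n : ℤ) : 0 < (3:ℝ) ^ n := zpow_pos (by norm_num) n

lemma len_ne_zero (J : TriInt) : J.len ≠ 0 := by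
  simp [TriInt.len, ENNReal.ofReal_eq_zero, not_le, zpow3_pos]

lemma len_ne_top (J : TriInt) : J.len ≠ ⊤ := ENNReal.ofReal_ne_top

lemma measurableSet_set (J : TriInt) : MeasurableSet J.set := measurableSet_Ico

lemma volume_set (J : TriInt) : volume J.set = J.len := by
  rw [TriInt.set, Real.volume_Ico]
  congr 1
  ring

lemma set_subset_Ici (J : TriInt) : J.set ⊆ Set.Ici (0:ℝ) := by
  intro x hx
  have h1 := hx.1
  have : (0:ℝ) ≤ (J.k : ℝ) * (3:ℝ) ^ J.n :=
    mul_nonneg (Nat.cast_nonneg _) (zpow3_pos J.n).le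
  exact le_trans this h1

/-- the `m`-th triadic ancestor -/
def anc (J : TriInt) (m : ℕ) : TriInt := ⟨J.n + m, J.k / 3 ^ m⟩

lemma anc_zero (J : TriInt) : J.anc 0 = J := by
  simp [anc]

lemma anc_anc (J : TriInt) (m m' : ℕ) : (J.anc m).anc m' = J.anc (m + m') := by
  simp only [anc, TriInt.mk.injEq]
  constructor
  · push_cast; ring
  · rw [Nat.div_div_eq_div_mul, ← pow_add]

lemma subset_anc (J : TriInt) (m : ℕ) : J.set ⊆ (J.anc m).set := by
  intro x hx
  obtain ⟨h1, h2⟩ := hx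
  have hz : (3:ℝ) ^ (J.n + (m:ℤ)) = (3:ℝ) ^ J.n * (3:ℝ) ^ m := by
    rw [zpow_add₀ (by norm_num : (3:ℝ) ≠ 0), zpow_natCast]
  have hp : (0:ℝ) < (3:ℝ) ^ J.n := zpow3_pos J.n
  constructor
  · show ((J.k / 3 ^ m : ℕ) : ℝ) * (3:ℝ) ^ (J.n + (m:ℤ)) ≤ x
    refine le_trans ?_ h1
    rw [hz, ← mul_assoc, mul_comm ((J.k / 3 ^ m : ℕ) : ℝ) ((3:ℝ) ^ J.n), mul_assoc]
    have : ((J.k / 3 ^ m : ℕ) : ℝ) * (3:ℝ) ^ m ≤ (J.k : ℝ) := by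
      have := Nat.div_mul_le_self J.k (3 ^ m)
      calc ((J.k / 3 ^ m : ℕ) : ℝ) * (3:ℝ) ^ m = ((J.k / 3 ^ m * 3 ^ m : ℕ) : ℝ) := by
            push_cast; ring
        _ ≤ (J.k : ℝ) := by exact_mod_cast this
    nlinarith
  · show x < (((J.k / 3 ^ m : ℕ) : ℝ) + 1) * (3:ℝ) ^ (J.n + (m:ℤ))
    refine lt_of_lt_of_le h2 ?_
    rw [hz]
    have hk : (J.k : ℝ) + 1 ≤ (((J.k / 3 ^ m : ℕ) : ℝ) + 1) * (3:ℝ) ^ m := by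
      have h3 : J.k < (J.k / 3 ^ m + 1) * 3 ^ m := by
        rw [Nat.add_mul, one_mul]
        exact Nat.lt_div_mul_add (Nat.pow_pos (by norm_num))
      have h4 : J.k + 1 ≤ (J.k / 3 ^ m + 1) * 3 ^ m := h3
      have : (J.k : ℝ) + 1 ≤ (((J.k / 3 ^ m + 1) * 3 ^ m : ℕ) : ℝ) := by exact_mod_cast h4
      push_cast at this
      nlinarith
    nlinarith

lemma eq_of_n_eq_of_mem {J K : TriInt} (hn : J.n = K.n) {x : ℝ}
    (hJ : x ∈ J.set) (hK : x ∈ K.set) : J = K := by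
  cases J with
  | mk n k =>
    cases K with
    | mk n' k' =>
      dsimp at hn
      subst hn
      obtain ⟨a1, a2⟩ := hJ
      obtain ⟨b1, b2⟩ := hK
      simp only at a1 a2 b1 b2
      have hp : (0:ℝ) < (3:ℝ) ^ n := zpow3_pos n
      have h1 : (k:ℝ) < (k':ℝ) + 1 := by
        have := lt_of_le_of_lt a1 b2
        exact lt_of_mul_lt_mul_right this hp.le
      have h2 : (k':ℝ) < (k:ℝ) + 1 := by
        have := lt_of_le_of_lt b1 a2
        exact lt_of_mul_lt_mul_right this hp.le
      have h1' : k ≤ k' := by exact_mod_cast Nat.lt_succ_iff.mp (by exact_mod_cast h1)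
      have h2' : k' ≤ k := by exact_mod_cast Nat.lt_succ_iff.mp (by exact_mod_cast h2)
      have : k = k' := le_antisymm h1' h2'
      simp [this]

lemma anc_eq_of_mem {J K : TriInt} {m : ℕ} (hn : K.n = J.n + m) {x : ℝ}
    (hJ : x ∈ J.set) (hK : x ∈ K.set) : K = J.anc m :=
  eq_of_n_eq_of_mem (by rw [hn]; rfl) hK (subset_anc J m hJ)

lemma exists_maximal (P : TriInt → Prop) (D : ℝ≥0∞) (hD : D ≠ ⊤)
    (hbd : ∀ K, P K → K.len ≤ D) {J : TriInt} (hJ : P J) :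
    ∃ K, P K ∧ (∀ m, 1 ≤ m → ¬ P (K.anc m)) ∧ J.set ⊆ K.set := by
  obtain ⟨M, hM⟩ : ∃ M : ℕ, ∀ m, M ≤ m → ¬ P (J.anc m) := by
    obtain ⟨M, hM⟩ := pow_unbounded_of_one_lt (R := ℝ)
      (D.toReal / 3 ^ J.n) (by norm_num : (1:ℝ) < 3)
    refine ⟨M, fun m hm hPm => ?_⟩
    have hlen : (J.anc m).len ≤ D := hbd _ hPm
    have hle : (3:ℝ) ^ (J.n + (m:ℤ)) ≤ D.toReal :=
      (ENNReal.ofReal_le_iff_le_toReal hD).mp hlen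
    have hz : (3:ℝ) ^ (J.n + (m:ℤ)) = 3 ^ J.n * 3 ^ m := by
      rw [zpow_add₀ (by norm_num : (3:ℝ) ≠ 0), zpow_natCast]
    have hp : (0:ℝ) < (3:ℝ) ^ J.n := zpow3_pos J.n
    have h3 : (3:ℝ) ^ m ≤ D.toReal / 3 ^ J.n := by
      rw [le_div_iff₀ hp]
      nlinarith [hle, hz]
    have h4 : (3:ℝ) ^ M ≤ (3:ℝ) ^ m := pow_le_pow_right₀ (by norm_num) hm
    linarith
  classical
  set m₀ := Nat.findGreatest (fun m => P (J.anc m)) M with hm₀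
  have h0 : P (J.anc 0) := by rw [anc_zero]; exact hJ
  have hm₀P : P (J.anc m₀) := Nat.findGreatest_spec (P := fun m => P (J.anc m)) (Nat.zero_le M) h0
  refine ⟨J.anc m₀, hm₀P, ?_, subset_anc J m₀⟩
  intro m hm hPm
  rw [anc_anc] at hPm
  by_cases hle : m₀ + m ≤ M
  · exact Nat.findGreatest_is_greatest (P := fun m => P (J.anc m)) (by omega) hle hPm
  · exact hM _ (by omega) hPm

end TriInt

lemma TriInt.eq_of_maximal_of_mem (P : TriInt → Prop) {K K' : TriInt}
    (hK : P K) (hKmax : ∀ m, 1 ≤ m → ¬ P (K.anc m))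
    (hK' : P K') (hK'max : ∀ m, 1 ≤ m → ¬ P (K'.anc m))
    {x : ℝ} (h1 : x ∈ K.set) (h2 : x ∈ K'.set) : K = K' := by
  rcases lt_trichotomy K.n K'.n with h | h | h
  · have hm : K'.n = K.n + ((K'.n - K.n).toNat : ℤ) := by omega
    have heq := TriInt.anc_eq_of_mem hm h1 h2
    rw [heq] at hK'
    exact absurd hK' (hKmax _ (by omega))
  · exact TriInt.eq_of_n_eq_of_mem h h1 h2
  · have hm : K.n = K'.n + ((K.n - K'.n).toNat : ℤ) := by omega
    have heq := TriInt.anc_eq_of_mem hm h2 h1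
    rw [heq] at hK
    exact absurd hK (hK'max _ (by omega))

/-- The weighted counting measure attached to a collection of triadic intervals. -/
def muG (G : Set TriInt) : Measure TriInt :=
  Measure.count.withDensity (G.indicator TriInt.len)

lemma measurableSet_tri (S : Set TriInt) : MeasurableSet S := trivial

lemma muG_apply (G S : Set TriInt) : muG G S = ∑' J : ↥(S ∩ G), (J : TriInt).len := by
  rw [muG, withDensity_apply _ (measurableSet_tri S),
    ← lintegral_indicator (measurableSet_tri S), lintegral_count,
    Set.indicator_indicator]
  exact (tsum_subtype (S ∩ G) TriInt.len).symm

lemma muG_le_sparse (G : Set TriInt) (K : TriInt) :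
    muG G {J | J.set ⊆ K.set} ≤ sparseNorm G * K.len := by
  rw [muG_apply]
  have hset : ({J : TriInt | J.set ⊆ K.set} ∩ G) = {J : TriInt | J ∈ G ∧ J.set ⊆ K.set} := by
    ext J; simp [Set.mem_inter_iff, and_comm]
  rw [hset]
  have h2 := le_iSup
    (fun J : TriInt => (∑' K' : {K' : TriInt // K' ∈ G ∧ K'.set ⊆ J.set}, K'.val.len) / J.len) K
  exact (ENNReal.div_le_iff_le_mul (Or.inl K.len_ne_zero) (Or.inl K.len_ne_top)).mp h2

set_option maxHeartbeats 1000000 in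
lemma covering (G : Set TriInt) (g : ℝ → ℝ≥0∞)
    (hB : ∫⁻ x in Set.Ici (0:ℝ), g x ≠ ⊤) {τ2 : ℝ≥0∞} (hτ0 : τ2 ≠ 0) (hτt : τ2 ≠ ⊤) :
    muG G {J : TriInt | τ2 * J.len < ∫⁻ x in J.set, g x}
      ≤ sparseNorm G * (τ2⁻¹ * ∫⁻ x in Set.Ici (0:ℝ), g x) := by
  set B := ∫⁻ x in Set.Ici (0:ℝ), g x with hBdef
  set P : TriInt → Prop := fun J => τ2 * J.len < ∫⁻ x in J.set, g x with hP
  have hbd : ∀ K, P K → K.len ≤ B / τ2 := by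
    intro K hK
    have h1 : ∫⁻ x in K.set, g x ≤ B := lintegral_mono_set K.set_subset_Ici
    have h2 : τ2 * K.len ≤ B := le_trans (le_of_lt hK) h1
    rw [ENNReal.le_div_iff_mul_le (Or.inl hτ0) (Or.inl hτt)]
    rwa [mul_comm] at h2
  have hDt : B / τ2 ≠ ⊤ := (ENNReal.div_lt_top hB hτ0).ne
  set Mx : Set TriInt := {K | P K ∧ ∀ m, 1 ≤ m → ¬ P (K.anc m)} with hMx
  have hcover : {J | P J} ⊆ ⋃ K : ↥Mx, {J : TriInt | J.set ⊆ (K : TriInt).set} := by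
    intro J hJ
    obtain ⟨K, hK1, hK2, hK3⟩ := TriInt.exists_maximal P _ hDt hbd hJ
    exact Set.mem_iUnion.mpr ⟨⟨K, hK1, hK2⟩, hK3⟩
  have hdisj : Pairwise (Function.onFun Disjoint fun K : ↥Mx => (K : TriInt).set) := by
    intro K K' hne
    rw [Function.onFun, Set.disjoint_left]
    intro x hx hx'
    exact hne (Subtype.ext
      (TriInt.eq_of_maximal_of_mem P K.2.1 K.2.2 K'.2.1 K'.2.2 hx hx'))
  have hlen : ∀ K : ↥Mx, (K : TriInt).len ≤ τ2⁻¹ * ∫⁻ x in (K : TriInt).set, g x := by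
    intro K
    rw [← ENNReal.div_eq_inv_mul,
      ENNReal.le_div_iff_mul_le (Or.inl hτ0) (Or.inl hτt), mul_comm]
    exact le_of_lt K.2.1
  clear_value Mx
  have hUnion : ∫⁻ x in ⋃ K : ↥Mx, (K : TriInt).set, g x
      = ∑' K : ↥Mx, ∫⁻ x in (K : TriInt).set, g x :=
    lintegral_iUnion (fun K => TriInt.measurableSet_set _) hdisj g
  calc muG G {J | P J}
      ≤ muG G (⋃ K : ↥Mx, {J : TriInt | J.set ⊆ (K : TriInt).set}) := measure_mono hcover
    _ ≤ ∑' K : ↥Mx, muG G {J : TriInt | J.set ⊆ (K : TriInt).set} := measure_iUnion_le _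
    _ ≤ ∑' K : ↥Mx, sparseNorm G * (K : TriInt).len :=
        ENNReal.tsum_le_tsum (fun K => muG_le_sparse G (K : TriInt))
    _ = sparseNorm G * ∑' K : ↥Mx, (K : TriInt).len := ENNReal.tsum_mul_left
    _ ≤ sparseNorm G * (τ2⁻¹ * B) := by
        refine mul_le_mul_right ?_ _
        calc ∑' K : ↥Mx, (K : TriInt).len
            ≤ ∑' K : ↥Mx, τ2⁻¹ * ∫⁻ x in (K : TriInt).set, g x :=
              ENNReal.tsum_le_tsum hlen
          _ = τ2⁻¹ * ∑' K : ↥Mx, ∫⁻ x in (K : TriInt).set, g x := ENNReal.tsum_mul_left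
          _ = τ2⁻¹ * ∫⁻ x in ⋃ K : ↥Mx, (K : TriInt).set, g x := by
              rw [hUnion]
          _ ≤ τ2⁻¹ * B := by
              refine mul_le_mul_right ?_ _
              refine lintegral_mono_set ?_
              refine Set.iUnion_subset ?_
              intro K
              exact (K : TriInt).set_subset_Ici

lemma measurable_of_tri {β : Type*} [MeasurableSpace β] (f : TriInt → β) : Measurable f :=
  fun _ _ => trivial

lemma lint_rpow {q : ℝ} (hq : -1 < q) {b : ℝ} (hb : 0 ≤ b) :
    ∫⁻ t in Set.Ioo 0 b, ENNReal.ofReal (t ^ q) = ENNReal.ofReal (b ^ (q + 1) / (q + 1)) := by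
  have hint : IntervalIntegrable (fun t : ℝ => t ^ q) volume 0 b :=
    intervalIntegral.intervalIntegrable_rpow' hq
  have hIoo : IntegrableOn (fun t : ℝ => t ^ q) (Set.Ioo 0 b) volume :=
    hint.1.mono_set Set.Ioo_subset_Ioc_self
  rw [← ofReal_integral_eq_lintegral_ofReal hIoo ?nn]
  case nn =>
    filter_upwards [ae_restrict_mem measurableSet_Ioo] with t ht
    exact Real.rpow_nonneg ht.1.le q
  congr 1
  rw [← integral_Ioc_eq_integral_Ioo, ← intervalIntegral.integral_of_le hb,
    integral_rpow (Or.inl hq), Real.zero_rpow (by linarith), sub_zero]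

lemma sparse_empty_of_zero {G : Set TriInt} (hG : sparseNorm G = 0) : G = ∅ := by
  by_contra hne
  obtain ⟨J, hJ⟩ := Set.nonempty_iff_ne_empty.mpr hne
  have h1 : J.len ≤ ∑' K : {K : TriInt // K ∈ G ∧ K.set ⊆ J.set}, K.val.len :=
    ENNReal.le_tsum (f := fun K : {K : TriInt // K ∈ G ∧ K.set ⊆ J.set} => K.val.len) ⟨J, hJ, subset_rfl⟩
  have h2 : (0:ℝ≥0∞) < (∑' K : {K : TriInt // K ∈ G ∧ K.set ⊆ J.set}, K.val.len) / J.len := by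
    refine ENNReal.div_pos (fun h0 => J.len_ne_zero ?_) J.len_ne_top
    exact le_antisymm (h0 ▸ h1) (zero_le)
  have h3 := le_iSup
    (fun I : TriInt => (∑' K : {K : TriInt // K ∈ G ∧ K.set ⊆ I.set}, K.val.len) / I.len) J
  exact absurd (le_trans h3 hG.le) (not_le.mpr h2)

set_option maxHeartbeats 2000000 in
lemma embed {r : ℝ} (hr : 1 < r) :
    ∃ C : ℝ≥0∞, C ≠ ⊤ ∧ ∀ G : Set TriInt, sparseNorm G ≠ ⊤ →
      ∀ h : ℝ → ℝ≥0∞, Measurable h →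
        (∑' J : G, J.val.len * ((∫⁻ x in J.val.set, h x) / J.val.len) ^ r)
          ≤ C * sparseNorm G * ∫⁻ x in Set.Ici (0:ℝ), h x ^ r := by
  have hr0 : (0:ℝ) < r := by linarith
  set C₀ : ℝ≥0∞ :=
    ENNReal.ofReal (2 * r) * ENNReal.ofReal ((r - 1)⁻¹) * (2:ℝ≥0∞) ^ (r - 1) with hC₀
  have hC₀top : C₀ ≠ ⊤ := by
    refine ENNReal.mul_ne_top (ENNReal.mul_ne_top ENNReal.ofReal_ne_top ENNReal.ofReal_ne_top) ?_
    exact (ENNReal.rpow_lt_top_of_nonneg (by linarith) (by norm_num)).ne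
  refine ⟨1 + C₀, by simp [ENNReal.add_ne_top, hC₀top], ?_⟩
  intro G hG h hm
  by_cases hG0 : sparseNorm G = 0
  · have hGe : G = ∅ := sparse_empty_of_zero hG0
    rw [hGe, tsum_empty]
    exact zero_le
  set Λ := sparseNorm G with hΛ
  set Ir := ∫⁻ x in Set.Ici (0:ℝ), h x ^ r with hIr
  by_cases hItop : Ir = ⊤
  · rw [hItop, ENNReal.mul_top]
    · exact le_top
    · exact mul_ne_zero (by simp) hG0
  by_cases hI0 : Ir = 0
  · have hae : ∀ᵐ x ∂(volume.restrict (Set.Ici (0:ℝ))), h x = 0 := by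
      have h1 : ∀ᵐ x ∂(volume.restrict (Set.Ici (0:ℝ))), h x ^ r = 0 :=
        (lintegral_eq_zero_iff (hm.pow_const r)).mp hI0
      filter_upwards [h1] with x hx
      rcases (ENNReal.rpow_eq_zero_iff.mp hx) with ⟨h0, _⟩ | ⟨_, hneg⟩
      · exact h0
      · linarith
    have hJ0 : ∀ J : TriInt, (∫⁻ x in J.set, h x) = 0 := by
      intro J
      have hsub : volume.restrict J.set ≪ volume.restrict (Set.Ici (0:ℝ)) :=
        Measure.absolutelyContinuous_of_le (Measure.restrict_mono J.set_subset_Ici le_rfl)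
      have : ∀ᵐ x ∂(volume.restrict J.set), h x = 0 := hsub.ae_le hae
      rw [lintegral_congr_ae this, lintegral_zero]
    calc (∑' J : G, J.val.len * ((∫⁻ x in J.val.set, h x) / J.val.len) ^ r)
        = ∑' J : G, 0 := tsum_congr fun J => by
          rw [hJ0, ENNReal.zero_div, ENNReal.zero_rpow_of_pos hr0, mul_zero]
      _ = 0 := tsum_zero
      _ ≤ _ := zero_le
  -- main case
  have hΛtop : Λ ≠ ⊤ := hG
  have hFfin : ∀ J : TriInt, (∫⁻ x in J.set, h x) / J.len ≠ ⊤ := by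
    intro J
    have hpt : ∀ x, h x ≤ 1 + h x ^ r := by
      intro x
      rcases le_total (h x) 1 with hx | hx
      · exact le_trans hx le_self_add
      · calc h x = h x ^ (1:ℝ) := (ENNReal.rpow_one _).symm
          _ ≤ h x ^ r := ENNReal.rpow_le_rpow_of_exponent_le hx hr.le
          _ ≤ 1 + h x ^ r := le_add_self
    have h1 : (∫⁻ x in J.set, h x) ≤ J.len + Ir := by
      calc (∫⁻ x in J.set, h x) ≤ ∫⁻ x in J.set, (1 + h x ^ r) := lintegral_mono hpt
        _ = (∫⁻ x in J.set, 1) + ∫⁻ x in J.set, h x ^ r := lintegral_add_left measurable_const _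
        _ ≤ J.len + Ir := by
            refine add_le_add ?_ (lintegral_mono_set J.set_subset_Ici)
            rw [setLIntegral_one, J.volume_set]
    refine (ENNReal.div_lt_top ?_ J.len_ne_zero).ne
    intro htop
    rw [htop] at h1
    exact (ENNReal.add_ne_top.mpr ⟨J.len_ne_top, hItop⟩) (le_antisymm le_top h1)
  set fR : TriInt → ℝ := fun J => ((∫⁻ x in J.set, h x) / J.len).toReal with hfR
  -- Claim A : the sparse sum equals a lintegral against muG
  have hA : (∑' J : G, J.val.len * ((∫⁻ x in J.val.set, h x) / J.val.len) ^ r)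
      = ∫⁻ J, ENNReal.ofReal (fR J ^ r) ∂(muG G) := by
    rw [muG, lintegral_withDensity_eq_lintegral_mul _ (measurable_of_tri _) (measurable_of_tri _),
      lintegral_count]
    have hpt : ∀ J : TriInt,
        (G.indicator TriInt.len * fun J => ENNReal.ofReal (fR J ^ r)) J
          = G.indicator (fun J => J.len * ((∫⁻ x in J.set, h x) / J.len) ^ r) J := by
      intro J
      simp only [Pi.mul_apply]
      by_cases hJ : J ∈ G
      · rw [Set.indicator_of_mem hJ, Set.indicator_of_mem hJ]
        congr 1
        show ENNReal.ofReal ((((∫⁻ x in J.set, h x) / J.len).toReal) ^ r)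
          = ((∫⁻ x in J.set, h x) / J.len) ^ r
        rw [ENNReal.toReal_rpow,
          ENNReal.ofReal_toReal (ENNReal.rpow_ne_top_of_nonneg hr0.le (hFfin J))]
      · rw [Set.indicator_of_notMem hJ, Set.indicator_of_notMem hJ, zero_mul]
    calc (∑' J : G, J.val.len * ((∫⁻ x in J.val.set, h x) / J.val.len) ^ r)
        = ∑' J : TriInt,
            G.indicator (fun J => J.len * ((∫⁻ x in J.set, h x) / J.len) ^ r) J :=
          tsum_subtype G (fun J => J.len * ((∫⁻ x in J.set, h x) / J.len) ^ r)
      _ = ∑' J : TriInt, (G.indicator TriInt.len * fun J => ENNReal.ofReal (fR J ^ r)) J :=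
          tsum_congr fun J => (hpt J).symm
  -- layer cake
  have hlc : ∫⁻ J, ENNReal.ofReal (fR J ^ r) ∂(muG G)
      = ∫⁻ t in Set.Ioi (0:ℝ), muG G {J | t < fR J} * ENNReal.ofReal (r * t ^ (r - 1)) := by
    have hcomp : ∀ J, (∫ t in (0:ℝ)..fR J, r * t ^ (r - 1)) = fR J ^ r := by
      intro J
      rw [intervalIntegral.integral_const_mul, integral_rpow (Or.inl (by linarith)),
        Real.zero_rpow (by linarith), sub_zero, sub_add_cancel]
      field_simp
    have := lintegral_comp_eq_lintegral_meas_lt_mul (muG G)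
      (f := fR) (g := fun t => r * t ^ (r - 1))
      (ae_of_all _ fun J => ENNReal.toReal_nonneg)
      ((measurable_of_tri fR).aemeasurable)
      (fun t _ => (intervalIntegral.intervalIntegrable_rpow' (by linarith)).const_mul r)
      ((ae_restrict_iff' measurableSet_Ioi).mpr (ae_of_all _ fun t ht =>
        mul_nonneg hr0.le (Real.rpow_nonneg (le_of_lt ht) _)))
    rw [← this]
    exact lintegral_congr fun J => by rw [hcomp]
  -- the truncated level functions
  set gg : ℝ → ℝ → ℝ≥0∞ := fun t x => if ENNReal.ofReal t / 2 < h x then h x else 0 with hgg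
  have hggm : Measurable (fun p : ℝ × ℝ => gg p.1 p.2) := by
    refine Measurable.ite ?_ (hm.comp measurable_snd) measurable_const
    exact measurableSet_lt (by fun_prop) (hm.comp measurable_snd)
  have hggm1 : ∀ t, Measurable (gg t) := fun t => hggm.comp (measurable_prodMk_left (x := t))
  have hτ0 : ∀ t : ℝ, 0 < t → (ENNReal.ofReal t / 2) ≠ 0 := by
    intro t ht
    simp [ENNReal.div_eq_zero_iff, ENNReal.ofReal_eq_zero, not_le, ht]
  have hτtop : ∀ t : ℝ, (ENNReal.ofReal t / 2) ≠ ⊤ :=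
    fun t => (ENNReal.div_lt_top ENNReal.ofReal_ne_top (by norm_num)).ne
  have hggle : ∀ t : ℝ, 0 < t → ∀ x,
      gg t x ≤ (ENNReal.ofReal t / 2) ^ (1 - r) * h x ^ r := by
    intro t ht x
    set τ2 := ENNReal.ofReal t / 2 with hτ2
    by_cases hc : τ2 < h x
    · rw [hgg]
      simp only [if_pos (show ENNReal.ofReal t / 2 < h x from hc)]
      rcases eq_or_ne (h x) ⊤ with htop | hfin
      · rw [htop, ENNReal.top_rpow_of_pos hr0, ENNReal.mul_top
          (ENNReal.rpow_pos (pos_iff_ne_zero.mpr (hτ0 t ht)) (hτtop t)).ne']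
      · have hx0 : h x ≠ 0 := (lt_of_le_of_lt (zero_le) hc).ne'
        have h1 : τ2 ^ (r - 1) * h x ≤ h x ^ (r - 1) * h x :=
          mul_le_mul_left (ENNReal.rpow_le_rpow hc.le (by linarith)) _
        have h2 : h x ^ (r - 1) * h x = h x ^ r := by
          rw [show r = r - 1 + 1 by ring, ENNReal.rpow_add _ _ hx0 hfin, ENNReal.rpow_one]
          ring_nf
        calc h x = (τ2 ^ (1 - r) * τ2 ^ (r - 1)) * h x := by
              rw [← ENNReal.rpow_add _ _ (hτ0 t ht) (hτtop t)]
              norm_num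
          _ = τ2 ^ (1 - r) * (τ2 ^ (r - 1) * h x) := by ring
          _ ≤ τ2 ^ (1 - r) * (h x ^ (r - 1) * h x) := mul_le_mul_right h1 _
          _ = τ2 ^ (1 - r) * h x ^ r := by rw [h2]
    · rw [hgg]
      simp only [if_neg (show ¬ (ENNReal.ofReal t / 2 < h x) from hc)]
      exact zero_le
  have hggfin : ∀ t : ℝ, 0 < t → (∫⁻ x in Set.Ici (0:ℝ), gg t x) ≠ ⊤ := by
    intro t ht
    have hb : (∫⁻ x in Set.Ici (0:ℝ), gg t x)
        ≤ (ENNReal.ofReal t / 2) ^ (1 - r) * Ir := by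
      calc (∫⁻ x in Set.Ici (0:ℝ), gg t x)
          ≤ ∫⁻ x in Set.Ici (0:ℝ), (ENNReal.ofReal t / 2) ^ (1 - r) * h x ^ r :=
            lintegral_mono (hggle t ht)
        _ = (ENNReal.ofReal t / 2) ^ (1 - r) * Ir :=
            lintegral_const_mul _ (hm.pow_const r)
    have hfin : (ENNReal.ofReal t / 2) ^ (1 - r) * Ir ≠ ⊤ := by
      refine ENNReal.mul_ne_top ?_ hItop
      rw [show (1 - r : ℝ) = -(r - 1) by ring, ENNReal.rpow_neg]
      exact ENNReal.inv_ne_top.mpr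
        (ENNReal.rpow_pos (pos_iff_ne_zero.mpr (hτ0 t ht)) (hτtop t)).ne'
    exact fun htop => hfin (le_antisymm le_top (htop ▸ hb))
  -- pointwise covering bound
  have hcov : ∀ t : ℝ, 0 < t → muG G {J | t < fR J}
      ≤ Λ * ((ENNReal.ofReal t / 2)⁻¹ * ∫⁻ x in Set.Ici (0:ℝ), gg t x) := by
    intro t ht
    refine le_trans (measure_mono ?_) (covering G (gg t) (hggfin t ht) (hτ0 t ht) (hτtop t))
    intro J hJ
    have h1 : ENNReal.ofReal t < (∫⁻ x in J.set, h x) / J.len := by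
      rw [ENNReal.ofReal_lt_iff_lt_toReal ht.le (hFfin J)]
      exact hJ
    have h2 : ENNReal.ofReal t * J.len < ∫⁻ x in J.set, h x :=
      (ENNReal.lt_div_iff_mul_lt (Or.inl J.len_ne_zero) (Or.inl J.len_ne_top)).mp h1
    have h3 : (∫⁻ x in J.set, h x)
        ≤ (∫⁻ x in J.set, gg t x) + (ENNReal.ofReal t / 2) * J.len := by
      calc (∫⁻ x in J.set, h x)
          ≤ ∫⁻ x in J.set, (gg t x + ENNReal.ofReal t / 2) := by
            refine lintegral_mono fun x => ?_
            by_cases hc : ENNReal.ofReal t / 2 < h x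
            · rw [hgg]; simp only [if_pos hc]; exact le_self_add
            · rw [hgg]; simp only [if_neg hc, zero_add]; exact not_lt.mp hc
        _ = (∫⁻ x in J.set, gg t x) + ∫⁻ x in J.set, (ENNReal.ofReal t / 2) :=
            lintegral_add_right _ measurable_const
        _ = (∫⁻ x in J.set, gg t x) + (ENNReal.ofReal t / 2) * J.len := by
            rw [setLIntegral_const, J.volume_set]
    have h4 : (ENNReal.ofReal t / 2) * J.len + (ENNReal.ofReal t / 2) * J.len
        < (∫⁻ x in J.set, gg t x) + (ENNReal.ofReal t / 2) * J.len := by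
      refine lt_of_lt_of_le ?_ h3
      rw [← add_mul, ENNReal.add_halves]
      exact h2
    exact (ENNReal.add_lt_add_iff_right
      (ENNReal.mul_ne_top (hτtop t) J.len_ne_top)).mp h4
  -- the weight in t
  set c : ℝ → ℝ≥0∞ := fun t => ENNReal.ofReal (2 * r * t ^ (r - 2)) with hc
  have hcm : Measurable c := by
    rw [hc]; fun_prop
  have hceq : ∀ t : ℝ, 0 < t →
      (ENNReal.ofReal t / 2)⁻¹ * ENNReal.ofReal (r * t ^ (r - 1)) = c t := by
    intro t ht
    have h2 : (ENNReal.ofReal t / 2)⁻¹ = ENNReal.ofReal t⁻¹ * 2 := by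
      rw [div_eq_mul_inv, ENNReal.mul_inv (Or.inl (by simpa [ENNReal.ofReal_eq_zero] using ht))
        (Or.inl ENNReal.ofReal_ne_top), inv_inv, ENNReal.ofReal_inv_of_pos ht]
    rw [hc, h2]
    have h20 : (2:ℝ≥0∞) = ENNReal.ofReal (2:ℝ) := by norm_num
    rw [h20, ← ENNReal.ofReal_mul (by positivity), ← ENNReal.ofReal_mul (by positivity)]
    congr 1
    have h3 : t⁻¹ * t ^ (r - 1) = t ^ (r - 2) := by
      rw [← Real.rpow_neg_one t, ← Real.rpow_add ht]
      ring_nf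
    calc t⁻¹ * 2 * (r * t ^ (r - 1)) = 2 * r * (t⁻¹ * t ^ (r - 1)) := by ring
      _ = 2 * r * t ^ (r - 2) := by rw [h3]
  -- a.e. bound for the inner t-integral
  have haefin : ∀ᵐ x ∂(volume.restrict (Set.Ici (0:ℝ))), h x ^ r < ⊤ :=
    ae_lt_top (hm.pow_const r) hItop
  have hinner : ∀ᵐ x ∂(volume.restrict (Set.Ici (0:ℝ))),
      (∫⁻ t in Set.Ioi (0:ℝ), c t * gg t x) ≤ C₀ * h x ^ r := by
    filter_upwards [haefin] with x hx
    have hxfin : h x ≠ ⊤ := by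
      intro hh
      rw [hh, ENNReal.top_rpow_of_pos hr0] at hx
      exact absurd hx (lt_irrefl _)
    by_cases hx0 : h x = 0
    · have hz : ∀ t, gg t x = 0 := fun t => by rw [hgg]; simp [hx0]
      simp [hz]
    · set b : ℝ := (2 * h x).toReal with hb
      have h2fin : (2 : ℝ≥0∞) * h x ≠ ⊤ := ENNReal.mul_ne_top (by norm_num) hxfin
      have hbpos : 0 < b := ENNReal.toReal_pos (by simp [hx0]) h2fin
      have hcond : ∀ t : ℝ, 0 < t → (ENNReal.ofReal t / 2 < h x ↔ t < b) := by
        intro t ht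
        rw [ENNReal.div_lt_iff (Or.inl (by norm_num)) (Or.inl (by norm_num))]
        rw [ENNReal.ofReal_lt_iff_lt_toReal ht.le (ENNReal.mul_ne_top hxfin (by norm_num))]
        rw [hb, mul_comm]
      have heq1 : (∫⁻ t in Set.Ioi (0:ℝ), c t * gg t x)
          = ∫⁻ t in Set.Ioo (0:ℝ) b, c t * h x := by
        rw [show (∫⁻ t in Set.Ioo (0:ℝ) b, c t * h x)
            = ∫⁻ t, (Set.Ioo (0:ℝ) b).indicator (fun t => c t * h x) t
              ∂(volume.restrict (Set.Ioi (0:ℝ))) from ?_]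
        · refine setLIntegral_congr_fun measurableSet_Ioi (fun t ht => ?_)
          by_cases htb : t < b
          · rw [hgg]
            simp only [if_pos ((hcond t ht).mpr htb)]
            rw [Set.indicator_of_mem (show t ∈ Set.Ioo (0:ℝ) b from ⟨ht, htb⟩)]
          · rw [hgg]
            simp only [if_neg (fun hcc => htb ((hcond t ht).mp hcc)), mul_zero]
            rw [Set.indicator_of_notMem (show t ∉ Set.Ioo (0:ℝ) b from fun hmem => htb hmem.2)]
        · rw [lintegral_indicator measurableSet_Ioo, Measure.restrict_restrict measurableSet_Ioo,
            Set.inter_eq_self_of_subset_left (fun y hy => hy.1)]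
      rw [heq1]
      have heq2 : (∫⁻ t in Set.Ioo (0:ℝ) b, c t * h x)
          = (∫⁻ t in Set.Ioo (0:ℝ) b, c t) * h x := lintegral_mul_const _ hcm
      rw [heq2]
      have hcal : (∫⁻ t in Set.Ioo (0:ℝ) b, c t)
          = ENNReal.ofReal (2 * r) * ENNReal.ofReal (b ^ (r - 1) / (r - 1)) := by
        have hptc : ∀ t : ℝ, c t = ENNReal.ofReal (2 * r) * ENNReal.ofReal (t ^ (r - 2)) :=
          fun t => by rw [hc, ← ENNReal.ofReal_mul (by positivity)]
        calc (∫⁻ t in Set.Ioo (0:ℝ) b, c t)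
            = ∫⁻ t in Set.Ioo (0:ℝ) b, ENNReal.ofReal (2 * r) * ENNReal.ofReal (t ^ (r - 2)) :=
              lintegral_congr fun t => hptc t
          _ = ENNReal.ofReal (2 * r) * ∫⁻ t in Set.Ioo (0:ℝ) b, ENNReal.ofReal (t ^ (r - 2)) :=
              lintegral_const_mul _ (by fun_prop)
          _ = ENNReal.ofReal (2 * r) * ENNReal.ofReal (b ^ (r - 2 + 1) / (r - 2 + 1)) := by
              rw [lint_rpow (by linarith : (-1:ℝ) < r - 2) hbpos.le]
          _ = ENNReal.ofReal (2 * r) * ENNReal.ofReal (b ^ (r - 1) / (r - 1)) := by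
              have hrr : r - 2 + 1 = r - 1 := by ring
              rw [hrr]
      have hofb : ENNReal.ofReal (b ^ (r - 1)) = (2:ℝ≥0∞) ^ (r - 1) * h x ^ (r - 1) := by
        rw [← ENNReal.ofReal_rpow_of_pos hbpos, hb, ENNReal.ofReal_toReal h2fin,
          ENNReal.mul_rpow_of_nonneg _ _ (by linarith : (0:ℝ) ≤ r - 1)]
      have hpow : h x ^ (r - 1) * h x = h x ^ r := by
        rw [show r = r - 1 + 1 by ring, ENNReal.rpow_add _ _ hx0 hxfin, ENNReal.rpow_one]
        ring_nf
      calc (∫⁻ t in Set.Ioo (0:ℝ) b, c t) * h x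
          = ENNReal.ofReal (2 * r) * ENNReal.ofReal (b ^ (r - 1) / (r - 1)) * h x := by
            rw [hcal]
        _ = ENNReal.ofReal (2 * r)
            * (ENNReal.ofReal ((r - 1)⁻¹) * ENNReal.ofReal (b ^ (r - 1))) * h x := by
            rw [div_eq_mul_inv, mul_comm (b ^ (r - 1)),
              ENNReal.ofReal_mul (inv_nonneg.mpr (by linarith : (0:ℝ) ≤ r - 1))]
        _ = ENNReal.ofReal (2 * r)
            * (ENNReal.ofReal ((r - 1)⁻¹) * ((2:ℝ≥0∞) ^ (r - 1) * h x ^ (r - 1))) * h x := by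
            rw [hofb]
        _ = C₀ * (h x ^ (r - 1) * h x) := by rw [hC₀]; ring
        _ = C₀ * h x ^ r := by rw [hpow]
        _ ≤ C₀ * h x ^ r := le_rfl
  -- assemble the t-integral estimate
  have hT : (∫⁻ t in Set.Ioi (0:ℝ), muG G {J | t < fR J} * ENNReal.ofReal (r * t ^ (r - 1)))
      ≤ Λ * ∫⁻ x in Set.Ici (0:ℝ), C₀ * h x ^ r := by
    have hmeas1 : Measurable fun t : ℝ => c t * ∫⁻ x in Set.Ici (0:ℝ), gg t x :=
      hcm.mul (Measurable.lintegral_prod_right hggm)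
    calc (∫⁻ t in Set.Ioi (0:ℝ), muG G {J | t < fR J} * ENNReal.ofReal (r * t ^ (r - 1)))
        ≤ ∫⁻ t in Set.Ioi (0:ℝ), Λ * (c t * ∫⁻ x in Set.Ici (0:ℝ), gg t x) := by
          refine lintegral_mono_ae (((ae_restrict_iff' measurableSet_Ioi).mpr
            (ae_of_all _ fun t ht => ?_)))
          calc muG G {J | t < fR J} * ENNReal.ofReal (r * t ^ (r - 1))
              ≤ (Λ * ((ENNReal.ofReal t / 2)⁻¹ * ∫⁻ x in Set.Ici (0:ℝ), gg t x))
                * ENNReal.ofReal (r * t ^ (r - 1)) := mul_le_mul_left (hcov t ht) _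
            _ = Λ * (((ENNReal.ofReal t / 2)⁻¹ * ENNReal.ofReal (r * t ^ (r - 1)))
                * ∫⁻ x in Set.Ici (0:ℝ), gg t x) := by ring
            _ = Λ * (c t * ∫⁻ x in Set.Ici (0:ℝ), gg t x) := by rw [hceq t ht]
      _ = Λ * ∫⁻ t in Set.Ioi (0:ℝ), c t * ∫⁻ x in Set.Ici (0:ℝ), gg t x :=
          lintegral_const_mul _ hmeas1
      _ = Λ * ∫⁻ t in Set.Ioi (0:ℝ), ∫⁻ x in Set.Ici (0:ℝ), c t * gg t x := by
          congr 1
          exact lintegral_congr fun t => (lintegral_const_mul _ (hggm1 t)).symm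
      _ = Λ * ∫⁻ x in Set.Ici (0:ℝ), ∫⁻ t in Set.Ioi (0:ℝ), c t * gg t x := by
          congr 1
          exact lintegral_lintegral_swap
            (((hcm.comp measurable_fst).mul hggm).aemeasurable)
      _ ≤ Λ * ∫⁻ x in Set.Ici (0:ℝ), C₀ * h x ^ r :=
          mul_le_mul_right (lintegral_mono_ae hinner) _
  -- conclusion
  calc (∑' J : G, J.val.len * ((∫⁻ x in J.val.set, h x) / J.val.len) ^ r)
      = ∫⁻ J, ENNReal.ofReal (fR J ^ r) ∂(muG G) := hA
    _ = ∫⁻ t in Set.Ioi (0:ℝ), muG G {J | t < fR J} * ENNReal.ofReal (r * t ^ (r - 1)) := hlc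
    _ ≤ Λ * ∫⁻ x in Set.Ici (0:ℝ), C₀ * h x ^ r := hT
    _ = Λ * (C₀ * Ir) := by rw [lintegral_const_mul _ (hm.pow_const r)]
    _ = C₀ * Λ * Ir := by ring
    _ ≤ (1 + C₀) * Λ * Ir := by
        refine mul_le_mul_left (mul_le_mul_left le_add_self _) _

/-- Sparse forms satisfy Hölder-type `L^p` bounds: for a Hölder
triple `(p̄_u)` and exponents `p_u < p̄_u`,
`Σ_{I∈𝒢} |I| Π_u (⨍_I f_u^{p_u})^{1/p_u} ≲ ‖𝒢‖_{sp} Π_u ‖f_u‖_{L^{p̄_u}(𝕎)}`. -/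
theorem stmt16 (pb p : Fin 3 → ℝ) (hpb : ∀ u, 1 ≤ pb u)
    (hH : ∑ u : Fin 3, (pb u)⁻¹ = 1)
    (hp : ∀ u, 0 < p u) (hlt : ∀ u, p u < pb u) :
    ∃ C : ℝ≥0∞, C ≠ ⊤ ∧ ∀ G : Set TriInt, sparseNorm G ≠ ⊤ →
      ∀ f : Fin 3 → ℝ → ℝ≥0∞, (∀ u, Measurable (f u)) →
        (∑' J : G, J.val.len * ∏ u : Fin 3,
            ((∫⁻ x in J.val.set, f u x ^ p u) / J.val.len) ^ (p u)⁻¹)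
          ≤ C * sparseNorm G *
            ∏ u : Fin 3, (∫⁻ x in Set.Ici (0:ℝ), f u x ^ pb u) ^ (pb u)⁻¹ := by
  have hpbpos : ∀ u, 0 < pb u := fun u => lt_of_lt_of_le one_pos (hpb u)
  have hrlt : ∀ u, 1 < pb u / p u := fun u => (one_lt_div (hp u)).mpr (hlt u)
  choose C hCtop hC using fun u : Fin 3 => embed (hrlt u)
  refine ⟨∏ u : Fin 3, C u ^ (pb u)⁻¹, ?_, ?_⟩
  · exact (ENNReal.prod_lt_top fun u _ => lt_top_iff_ne_top.mpr
      (ENNReal.rpow_ne_top_of_nonneg (inv_nonneg.mpr (hpbpos u).le) (hCtop u))).ne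
  intro G hG f hf
  by_cases hG0 : sparseNorm G = 0
  · rw [sparse_empty_of_zero hG0, tsum_empty]
    exact zero_le
  set Λ := sparseNorm G with hΛ
  set F : Fin 3 → TriInt → ℝ≥0∞ := fun u J => (∫⁻ x in J.set, f u x ^ p u) / J.len with hF
  set w : Fin 3 → TriInt → ℝ≥0∞ := fun u J => J.len * F u J ^ (pb u / p u) with hw
  have hexp : ∀ u, (pb u / p u) * (pb u)⁻¹ = (p u)⁻¹ := fun u => by
    rw [div_eq_mul_inv, mul_right_comm, mul_inv_cancel₀ (hpbpos u).ne', one_mul]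
  have hsum3 : (pb 0)⁻¹ + (pb 1)⁻¹ + (pb 2)⁻¹ = 1 := by rw [← hH, Fin.sum_univ_three]
  have hfact : ∀ J : TriInt, J.len * ∏ u : Fin 3, F u J ^ (p u)⁻¹
      = ∏ u : Fin 3, w u J ^ (pb u)⁻¹ := by
    intro J
    have h2 : ∀ u, w u J ^ (pb u)⁻¹ = J.len ^ (pb u)⁻¹ * F u J ^ (p u)⁻¹ := fun u => by
      rw [hw]
      rw [ENNReal.mul_rpow_of_nonneg _ _ (inv_nonneg.mpr (hpbpos u).le),
        ← ENNReal.rpow_mul, hexp u]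
    rw [Finset.prod_congr rfl (fun u _ => h2 u), Finset.prod_mul_distrib]
    congr 1
    rw [Fin.prod_univ_three,
      ← ENNReal.rpow_add _ _ J.len_ne_zero J.len_ne_top,
      ← ENNReal.rpow_add _ _ J.len_ne_zero J.len_ne_top,
      hsum3, ENNReal.rpow_one]
  have hHold : (∑' J : G, ∏ u : Fin 3, w u J.val ^ (pb u)⁻¹)
      ≤ ∏ u : Fin 3, (∑' J : G, w u J.val) ^ (pb u)⁻¹ := by
    have hmain := ENNReal.lintegral_prod_norm_pow_le
      (μ := (Measure.count : Measure TriInt)) Finset.univ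
      (f := fun u J => G.indicator (w u) J)
      (fun u _ => (measurable_of_tri _).aemeasurable) (p := fun u => (pb u)⁻¹)
      hH (fun u _ => inv_nonneg.mpr (hpbpos u).le)
    simp only [lintegral_count] at hmain
    have hL : (∑' J : G, ∏ u : Fin 3, w u J.val ^ (pb u)⁻¹)
        = ∑' J : TriInt, ∏ u : Fin 3, (G.indicator (w u) J) ^ (pb u)⁻¹ := by
      rw [tsum_subtype G (fun J => ∏ u : Fin 3, w u J ^ (pb u)⁻¹)]
      refine tsum_congr fun J => ?_
      by_cases hJ : J ∈ G
      · rw [Set.indicator_of_mem hJ]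
        exact Finset.prod_congr rfl fun u _ => by rw [Set.indicator_of_mem hJ]
      · rw [Set.indicator_of_notMem hJ, eq_comm]
        refine Finset.prod_eq_zero (Finset.mem_univ (0 : Fin 3)) ?_
        rw [Set.indicator_of_notMem hJ, ENNReal.zero_rpow_of_pos (inv_pos.mpr (hpbpos 0))]
    have hR : ∀ u : Fin 3, (∑' J : TriInt, G.indicator (w u) J) = ∑' J : G, w u J.val :=
      fun u => (tsum_subtype G (w u)).symm
    calc (∑' J : G, ∏ u : Fin 3, w u J.val ^ (pb u)⁻¹)
        = ∑' J : TriInt, ∏ u : Fin 3, (G.indicator (w u) J) ^ (pb u)⁻¹ := hL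
      _ ≤ ∏ u : Fin 3, (∑' J : TriInt, G.indicator (w u) J) ^ (pb u)⁻¹ := hmain
      _ = ∏ u : Fin 3, (∑' J : G, w u J.val) ^ (pb u)⁻¹ :=
          Finset.prod_congr rfl fun u _ => by rw [hR u]
  have hemb : ∀ u : Fin 3,
      (∑' J : G, w u J.val) ≤ C u * Λ * ∫⁻ x in Set.Ici (0:ℝ), f u x ^ pb u := by
    intro u
    have hthis := hC u G hG (fun x => f u x ^ p u) ((hf u).pow_const (p u))
    have hint : ∀ x : ℝ, (f u x ^ p u) ^ (pb u / p u) = f u x ^ pb u := fun x => by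
      rw [← ENNReal.rpow_mul]
      congr 1
      field_simp
      rw [mul_comm, mul_div_assoc, div_self (hp u).ne', mul_one]
    calc (∑' J : G, w u J.val)
        ≤ C u * Λ * ∫⁻ x in Set.Ici (0:ℝ), (f u x ^ p u) ^ (pb u / p u) := hthis
      _ = C u * Λ * ∫⁻ x in Set.Ici (0:ℝ), f u x ^ pb u := by
          congr 1
          exact lintegral_congr fun x => hint x
  calc (∑' J : G, J.val.len * ∏ u : Fin 3,
          ((∫⁻ x in J.val.set, f u x ^ p u) / J.val.len) ^ (p u)⁻¹)
      = ∑' J : G, ∏ u : Fin 3, w u J.val ^ (pb u)⁻¹ := tsum_congr fun J => hfact J.val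
    _ ≤ ∏ u : Fin 3, (∑' J : G, w u J.val) ^ (pb u)⁻¹ := hHold
    _ ≤ ∏ u : Fin 3, (C u * Λ * ∫⁻ x in Set.Ici (0:ℝ), f u x ^ pb u) ^ (pb u)⁻¹ :=
        Finset.prod_le_prod' fun u _ =>
          ENNReal.rpow_le_rpow (hemb u) (inv_nonneg.mpr (hpbpos u).le)
    _ = (∏ u : Fin 3, C u ^ (pb u)⁻¹) * (∏ u : Fin 3, Λ ^ (pb u)⁻¹)
        * ∏ u : Fin 3, (∫⁻ x in Set.Ici (0:ℝ), f u x ^ pb u) ^ (pb u)⁻¹ := by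
        rw [← Finset.prod_mul_distrib, ← Finset.prod_mul_distrib]
        exact Finset.prod_congr rfl fun u _ => by
          rw [ENNReal.mul_rpow_of_nonneg _ _ (inv_nonneg.mpr (hpbpos u).le),
            ENNReal.mul_rpow_of_nonneg _ _ (inv_nonneg.mpr (hpbpos u).le)]
    _ = (∏ u : Fin 3, C u ^ (pb u)⁻¹) * Λ
        * ∏ u : Fin 3, (∫⁻ x in Set.Ici (0:ℝ), f u x ^ pb u) ^ (pb u)⁻¹ := by
        congr 2
        rw [Fin.prod_univ_three, ← ENNReal.rpow_add _ _ hG0 hG,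
          ← ENNReal.rpow_add _ _ hG0 hG, hsum3, ENNReal.rpow_one]
end
end

section
/- Region of exponents: Let γ_u = 1/r_u ∈ (0,1/2] for u = 0,1,2. There exists a Hölder triple (p₀,p₁,p₂) ∈ (1,∞)³ (i.e. Σ 1/p_u = 1) satisfying Σ_{u=0}^2 1/(min(p_u,r_u)' (r_u − 1)) > 1 if and only if ρ := γ₀ + γ₁ + γ₂ − 1 > 0 together with the cube condition; more precisely, writing β_u = 1/p_u, the admissibility condition Σ 1/(min(p_u,r_u)'(r_u−1)) > 1 is equivalent to Σ_{u=0}^2 min(1−β_u, 1−γ_u) · γ_u/(1−γ_u) > 1. -/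
open scoped ENNReal NNReal Classical

noncomputable section


open MeasureTheory

lemma stmt17_key (q r : ℝ) (hq : 1 < q) (hr : 2 ≤ r) :
    (min q r / (min q r - 1) * (r - 1))⁻¹
      = min (1 - q⁻¹) (1 - r⁻¹) * (r⁻¹ / (1 - r⁻¹)) := by
  have hr1 : 1 < r := by linarith
  rcases le_total q r with h | h
  · rw [min_eq_left h, min_eq_left (by
      have : r⁻¹ ≤ q⁻¹ := by
        apply inv_anti₀ (by linarith) h
      linarith)]
    have hq0 : q ≠ 0 := by positivity
    have hq1 : q - 1 ≠ 0 := by intro h'; nlinarith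
    have hr0 : r ≠ 0 := by positivity
    have hr1' : r - 1 ≠ 0 := by intro h'; nlinarith
    have h1r : 1 - r⁻¹ ≠ 0 := by
      have : r⁻¹ < 1 := by
        rw [inv_lt_one_iff₀]; right; exact hr1
      intro h'; linarith
    field_simp
  · rw [min_eq_right h, min_eq_right (by
      have : q⁻¹ ≤ r⁻¹ := by
        apply inv_anti₀ (by linarith) h
      linarith)]
    have hr0 : r ≠ 0 := by positivity
    have hr1' : r - 1 ≠ 0 := by intro h'; nlinarith
    have h1r : 1 - r⁻¹ ≠ 0 := by
      have : r⁻¹ < 1 := by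
        rw [inv_lt_one_iff₀]; right; exact hr1
      intro h'; linarith
    field_simp

/-- Region of exponents: for `γ_u = 1/r_u ∈ (0,1/2]`, the
admissibility quantity satisfies the algebraic identity
`Σ_u 1/(min(p_u,r_u)'(r_u−1)) = Σ_u min(1−β_u, 1−γ_u)·γ_u/(1−γ_u)` (`β_u = 1/p_u`),
and admissible Hölder triples exist only if `Σ_u γ_u > 1`. -/
theorem stmt17 (r : Fin 3 → ℝ) (hr : ∀ u, 2 ≤ r u) :
    (∀ q : Fin 3 → ℝ, (∀ u, 1 < q u) → ∑ u : Fin 3, (q u)⁻¹ = 1 →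
      ∑ u : Fin 3, (min (q u) (r u) / (min (q u) (r u) - 1) * (r u - 1))⁻¹
        = ∑ u : Fin 3, min (1 - (q u)⁻¹) (1 - (r u)⁻¹) * ((r u)⁻¹ / (1 - (r u)⁻¹))) ∧
    ((∃ q : Fin 3 → ℝ, (∀ u, 1 < q u) ∧ ∑ u : Fin 3, (q u)⁻¹ = 1 ∧
        1 < ∑ u : Fin 3, (min (q u) (r u) / (min (q u) (r u) - 1) * (r u - 1))⁻¹) →
      1 < ∑ u : Fin 3, (r u)⁻¹) := by
  constructor
  · intro q hq _
    exact Finset.sum_congr rfl fun u _ => stmt17_key (q u) (r u) (hq u) (hr u)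
  · rintro ⟨q, hq, hsum, hbig⟩
    rw [Finset.sum_congr rfl fun u _ => stmt17_key (q u) (r u) (hq u) (hr u)] at hbig
    calc (1:ℝ) < _ := hbig
      _ ≤ ∑ u : Fin 3, (r u)⁻¹ := by
        apply Finset.sum_le_sum
        intro u _
        have hru := hr u
        have hinv : (r u)⁻¹ ≤ 2⁻¹ := by
          apply inv_anti₀ (by norm_num) hru
        have hpos : (0:ℝ) < (r u)⁻¹ := by positivity
        have h1 : (0:ℝ) < 1 - (r u)⁻¹ := by linarith
        have hmin : min (1 - (q u)⁻¹) (1 - (r u)⁻¹) ≤ 1 - (r u)⁻¹ := min_le_right _ _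
        have hfac : (0:ℝ) ≤ (r u)⁻¹ / (1 - (r u)⁻¹) := by positivity
        calc min (1 - (q u)⁻¹) (1 - (r u)⁻¹) * ((r u)⁻¹ / (1 - (r u)⁻¹))
            ≤ (1 - (r u)⁻¹) * ((r u)⁻¹ / (1 - (r u)⁻¹)) := by
              exact mul_le_mul_of_nonneg_right hmin hfac
          _ = (r u)⁻¹ := by rw [mul_comm, div_mul_cancel₀ _ h1.ne']
end
end
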